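/- For every real u ≥ 0, the function h(u) := (1+u)·log(1+u) − u satisfies h(u) ≥ (u·log u)/2, where log is the natural logarithm and we interpret u·log u as 0 at u = 0. -/

import Mathlib

/-! For `u ≤ 1` the right-hand side is nonpositive while `h(u) ≥ 0`. For `u > 1`, the bound
`log (1 + u) ≥ log u + 1 / (1 + u)` gives `h(u) ≥ (1 + u) log u + 1 - u`, so it suffices that
`(1 + u / 2) log u ≥ u - 1`. This follows from the logarithmic-mean inequality
`log u ≥ 2 (u - 1) / (u + 1)`, the first term of the series `log u = 2 artanh ((u - 1) / (u + 1))`. -/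

open Real

lemma two_div_two_mul_add_one_le_log_one_add_inv {a : ℝ} (ha : 0 < a) :
    2 / (2 * a + 1) ≤ log (1 + a⁻¹) := by
  simpa [div_eq_mul_inv] using le_hasSum (hasSum_log_one_add_inv ha) 0 fun k _ ↦ by positivity

lemma two_mul_sub_one_div_add_one_le_log {x : ℝ} (hx : 1 ≤ x) :
    2 * (x - 1) / (x + 1) ≤ log x := by
  rcases hx.eq_or_lt with rfl | hx
  · simp
  have hx' : 0 < x - 1 := sub_pos.2 hx
  calc 2 * (x - 1) / (x + 1) = 2 / (2 * (x - 1)⁻¹ + 1) := by field_simp; ring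
    _ ≤ log (1 + (x - 1)⁻¹⁻¹) := two_div_two_mul_add_one_le_log_one_add_inv (inv_pos.2 hx')
    _ = log x := by rw [inv_inv, add_sub_cancel]

lemma log_add_inv_one_add_le_log_one_add {x : ℝ} (hx : 0 < x) :
    log x + (1 + x)⁻¹ ≤ log (1 + x) := by
  have h := one_sub_inv_le_log_of_pos (div_pos (by positivity) hx : 0 < (1 + x) / x)
  rw [log_div (by positivity) hx.ne', inv_div] at h
  have : 1 - x / (1 + x) = (1 + x)⁻¹ := by field_simp; ring
  linarith

lemma self_le_one_add_mul_log_one_add {u : ℝ} (hu : 0 ≤ u) :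
    u ≤ (1 + u) * log (1 + u) := by
  have hu' : 0 < 1 + u := by positivity
  calc u = (1 + u) * (1 - (1 + u)⁻¹) := by field_simp; ring
    _ ≤ (1 + u) * log (1 + u) := by gcongr; exact one_sub_inv_le_log_of_pos hu'

lemma sub_one_le_one_add_half_mul_log {u : ℝ} (hu : 1 ≤ u) :
    u - 1 ≤ (1 + u / 2) * log u := by
  calc u - 1 ≤ (1 + u / 2) * (2 * (u - 1) / (u + 1)) := by
        rw [mul_div_assoc', le_div_iff₀ (by positivity)]
        nlinarith
    _ ≤ (1 + u / 2) * log u := by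
        gcongr
        exact two_mul_sub_one_div_add_one_le_log hu

/-- For every real `u ≥ 0`, `h(u) = (1+u) log(1+u) - u` satisfies `h(u) ≥ u log u / 2`.
(In Lean, `Real.log 0 = 0`, so `u * log u` is interpreted as `0` at `u = 0`.) -/
theorem stmt_2 (u : ℝ) (hu : 0 ≤ u) :
    (1 + u) * Real.log (1 + u) - u ≥ u * Real.log u / 2 := by
  rcases le_or_gt u 1 with hu1 | hu1
  · linarith [self_le_one_add_mul_log_one_add hu, mul_log_nonpos hu hu1]
  have hlog : (1 + u) * log u + 1 ≤ (1 + u) * log (1 + u) := by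
    calc (1 + u) * log u + 1 = (1 + u) * (log u + (1 + u)⁻¹) := by field_simp
      _ ≤ (1 + u) * log (1 + u) := by
          gcongr
          exact log_add_inv_one_add_le_log_one_add (by positivity)
  linarith [sub_one_le_one_add_half_mul_log hu1.le]
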